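/- Let a ∈ F_q^n have pairwise distinct entries and b have nonzero entries. If 1 ≤ k and 2k - 1 ≤ n - 1 (i.e. k ≤ n/2), then the 2-closure of GRS_k(a,b) equals GRS_k(a,b); that is, GRS codes of rate at most 1/2 (strictly, with 2k-1 < n) are 2-closed. -/

import Mathlib

open Finset

variable {F : Type*} [Field F] {n : ℕ}

/-- Schur (componentwise) product of two linear codes: the span of componentwise products. -/
def schurMul (A B : Submodule F (Fin n → F)) : Submodule F (Fin n → F) :=
  Submodule.span F {x | ∃ a ∈ A, ∃ b ∈ B, x = a * b}

/-- `schurPow C t` is the `t`-fold Schur power `C^(t)` (with `C^(0)` conventionally `C`). -/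
def schurPow (C : Submodule F (Fin n → F)) : ℕ → Submodule F (Fin n → F)
  | 0 => C
  | 1 => C
  | (t + 2) => schurMul C (schurPow C (t + 1))

/-- Dual code with respect to the standard bilinear form `⟨x, y⟩ = ∑ i, x i * y i`. -/
def dualCode (C : Submodule F (Fin n → F)) : Submodule F (Fin n → F) where
  carrier := {x | ∀ c ∈ C, ∑ i, x i * c i = 0}
  zero_mem' := fun c _ => by simp
  add_mem' := fun {a b} ha hb c hc => by
    have h : ∑ i, ((a + b) i * c i) = (∑ i, a i * c i) + ∑ i, b i * c i := by
      simp [add_mul, Finset.sum_add_distrib]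
    show ∑ i, (a + b) i * c i = 0
    rw [h, ha c hc, hb c hc, add_zero]
  smul_mem' := fun r a ha c hc => by
    have h : ∑ i, ((r • a) i * c i) = r * ∑ i, a i * c i := by
      simp [Finset.mul_sum, mul_assoc]
    show ∑ i, (r • a) i * c i = 0
    rw [h, ha c hc, mul_zero]

/-- The `t`-closure of a code `C`: all vectors `a` with `a * C^(t-1) ⊆ C^(t)`. -/
def closureSet (C : Submodule F (Fin n → F)) (t : ℕ) : Set (Fin n → F) :=
  {a | ∀ c ∈ schurPow C (t - 1), a * c ∈ schurPow C t}

/-- Generalized Reed–Solomon code `GRS_k(a, b)`. -/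
def GRS (k : ℕ) (a b : Fin n → F) : Submodule F (Fin n → F) :=
  Submodule.span F
    {x | ∃ f : Polynomial F, f.degree < (k : WithBot ℕ) ∧ x = fun i => b i * f.eval (a i)}

/-- Vectors vanishing on an index set `I`. -/
def zeroOn (I : Set (Fin n)) : Submodule F (Fin n → F) where
  carrier := {c | ∀ i ∈ I, c i = 0}
  zero_mem' := fun i _ => rfl
  add_mem' := fun {a b} ha hb i hi => by simp [ha i hi, hb i hi]
  smul_mem' := fun r a ha i hi => by simp [ha i hi]

open Polynomial in
lemma mem_GRS_iff {k : ℕ} {a b : Fin n → F} {x : Fin n → F} :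
    x ∈ GRS k a b ↔ ∃ f : Polynomial F, f.degree < (k : WithBot ℕ) ∧
      x = fun i => b i * f.eval (a i) := by
  constructor
  · intro hx
    refine Submodule.span_induction (fun y hy => hy) ?_ ?_ ?_ hx
    · exact ⟨0, by simp only [Polynomial.degree_zero]; exact WithBot.bot_lt_coe k, by funext i; simp⟩
    · rintro y z _ _ ⟨f, hf, rfl⟩ ⟨g, hg, rfl⟩
      refine ⟨f + g, lt_of_le_of_lt (degree_add_le f g) (max_lt hf hg), ?_⟩
      funext i; simp [mul_add]
    · rintro r y _ ⟨f, hf, rfl⟩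
      refine ⟨r • f, lt_of_le_of_lt (degree_smul_le r f) hf, ?_⟩
      funext i; simp [Pi.smul_apply, smul_eq_mul]; ring
  · rintro ⟨f, hf, rfl⟩; exact Submodule.subset_span ⟨f, hf, rfl⟩

open Polynomial in
lemma schurMul_GRS_le {k : ℕ} (hk : 1 ≤ k) (a b : Fin n → F) :
    schurMul (GRS k a b) (GRS k a b) ≤ GRS (2 * k - 1) a (b * b) := by
  rw [schurMul, Submodule.span_le]
  rintro _ ⟨u, hu, v, hv, rfl⟩
  obtain ⟨f, hf, rfl⟩ := mem_GRS_iff.1 hu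
  obtain ⟨g, hg, rfl⟩ := mem_GRS_iff.1 hv
  refine mem_GRS_iff.2 ⟨f * g, ?_, by funext i; simp [Pi.mul_apply]; ring⟩
  rcases eq_or_ne f 0 with rfl | hf0
  · simp only [zero_mul, degree_zero]; exact WithBot.bot_lt_coe _
  rcases eq_or_ne g 0 with rfl | hg0
  · simp only [mul_zero, degree_zero]; exact WithBot.bot_lt_coe _
  have h1 : f.natDegree < k := (natDegree_lt_iff_degree_lt hf0).2 hf
  have h2 : g.natDegree < k := (natDegree_lt_iff_degree_lt hg0).2 hg
  have hfg : f * g ≠ 0 := mul_ne_zero hf0 hg0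
  refine (natDegree_lt_iff_degree_lt hfg).1 ?_
  rw [natDegree_mul hf0 hg0]
  omega

open Polynomial in
theorem GRS_two_closed (a b : Fin n → F) (ha : Function.Injective a) (hb : ∀ i, b i ≠ 0)
    (k : ℕ) (hk : 1 ≤ k) (hkn : 2 * k - 1 ≤ n - 1) :
    closureSet (GRS k a b) 2 = ↑(GRS k a b) := by
  have hn : 2 * k - 1 < n := by omega
  ext x
  constructor
  · intro hx
    -- hx : ∀ c ∈ GRS k a b, x * c ∈ schurMul (GRS k a b) (GRS k a b)
    have hrel : ∀ j, j < k → ∃ g : Polynomial F,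
        g.degree < ((2 * k - 1 : ℕ) : WithBot ℕ) ∧
        ∀ i, x i * (b i * a i ^ j) = b i * b i * g.eval (a i) := by
      intro j hj
      have hdx : (X ^ j : Polynomial F).degree < (k : WithBot ℕ) := by
        rw [degree_X_pow]; exact_mod_cast hj
      have hc : (fun i => b i * (X ^ j : Polynomial F).eval (a i)) ∈ GRS k a b :=
        mem_GRS_iff.2 ⟨X ^ j, hdx, rfl⟩
      have hmem : x * (fun i => b i * (X ^ j : Polynomial F).eval (a i)) ∈
          schurMul (GRS k a b) (GRS k a b) := hx _ hc
      obtain ⟨g, hg, hxg⟩ := mem_GRS_iff.1 (schurMul_GRS_le hk a b hmem)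
      refine ⟨g, hg, fun i => ?_⟩
      have := congrFun hxg i
      simpa [Pi.mul_apply] using this
    choose g hgdeg hgrel using hrel
    have h0 : (0 : ℕ) < k := hk
    set g0 := g 0 h0 with hg0def
    have hrel0 : ∀ i, x i * b i = b i * b i * g0.eval (a i) := by
      intro i; have := hgrel 0 h0 i; simpa using this
    rcases eq_or_ne g0 0 with hg00 | hg0ne
    · -- then x = 0
      have hx0 : x = 0 := by
        funext i
        have := hrel0 i
        rw [hg00] at this
        simp at this
        rcases this with h | h
        · exact h
        · exact absurd h (hb i)
      rw [hx0]
      exact Submodule.zero_mem _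
    -- key induction
    have hdeg_nat : ∀ j (hj : j < k), (g j hj).natDegree ≤ 2 * k - 2 := by
      intro j hj
      rcases eq_or_ne (g j hj) 0 with h | h
      · simp [h]
      have := (natDegree_lt_iff_degree_lt h).2 (hgdeg j hj)
      omega
    have key : ∀ j (hj : j < k), X ^ j * g0 = g j hj := by
      intro j
      induction j with
      | zero => intro hj; simp [hg0def]
      | succ m ih =>
        intro hj
        have hm : m < k := Nat.lt_of_succ_lt hj
        have ihm := ih hm
        have hg0nat : m + g0.natDegree ≤ 2 * k - 2 := by
          have := hdeg_nat m hm
          rw [← ihm, natDegree_mul (pow_ne_zero m (Polynomial.X_ne_zero (R := F))) hg0ne,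
            natDegree_X_pow] at this
          exact this
        set h := X ^ (m + 1) * g0 - g (m + 1) hj with hhdef
        have hroots : ∀ i, h.eval (a i) = 0 := by
          intro i
          have h1 := hgrel (m + 1) hj i
          have h2 := hrel0 i
          have hb2 : b i * b i ≠ 0 := mul_ne_zero (hb i) (hb i)
          have : b i * b i * (a i ^ (m + 1) * g0.eval (a i)) =
              b i * b i * ((g (m + 1) hj).eval (a i)) := by
            calc b i * b i * (a i ^ (m + 1) * g0.eval (a i))
                = a i ^ (m + 1) * (b i * b i * g0.eval (a i)) := by ring
              _ = a i ^ (m + 1) * (x i * b i) := by rw [h2]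
              _ = x i * (b i * a i ^ (m + 1)) := by ring
              _ = b i * b i * ((g (m + 1) hj).eval (a i)) := h1
          have heq := mul_left_cancel₀ hb2 this
          simp [hhdef, heq]
        have hcard : h.natDegree < n := by
          have h1 : (X ^ (m + 1) * g0 : Polynomial F).natDegree = m + 1 + g0.natDegree := by
            rw [natDegree_mul (pow_ne_zero (m + 1) (Polynomial.X_ne_zero (R := F))) hg0ne, natDegree_X_pow]
          have h2 := hdeg_nat (m + 1) hj
          have hle : h.natDegree ≤ max (X ^ (m + 1) * g0 : Polynomial F).natDegree
              (g (m + 1) hj).natDegree := natDegree_sub_le _ _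
          refine lt_of_le_of_lt hle (max_lt ?_ ?_)
          · rw [h1]; omega
          · omega
        have hzero : h = 0 := by
          refine Polynomial.eq_zero_of_natDegree_lt_card_of_eval_eq_zero h ha hroots ?_
          simpa using hcard
        exact sub_eq_zero.1 hzero
    -- conclude deg g0 < k
    have hkm : k - 1 < k := by omega
    have hfin := key (k - 1) hkm
    have hg0deg : g0.natDegree < k := by
      have := hdeg_nat (k - 1) hkm
      rw [← hfin, natDegree_mul (pow_ne_zero (k - 1) (Polynomial.X_ne_zero (R := F))) hg0ne,
        natDegree_X_pow] at this
      omega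
    refine mem_GRS_iff.2 ⟨g0, (natDegree_lt_iff_degree_lt hg0ne).1 hg0deg, ?_⟩
    funext i
    have := hrel0 i
    have hbne := hb i
    field_simp at this ⊢
    -- x i * b i = b i * b i * g0.eval (a i) → x i = b i * g0.eval (a i)
    have h2 : x i * b i = (b i * g0.eval (a i)) * b i := by rw [this]
    exact mul_right_cancel₀ hbne h2
  · intro hx
    intro c hc
    have hc' : c ∈ GRS k a b := hc
    exact Submodule.subset_span ⟨x, hx, c, hc', rfl⟩
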